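/- Let φ : Fin M → ℝ with 0 ≤ φ m ≤ C₅ for all m, let v : Fin M → ℝ with |v m| ≤ C₄ for all m, and suppose ∑_{m ≠ n} (φ m − φ n)² ≥ 2·M·(M−1)·d² (ordered pairs, M ≥ 2). Then (∑_m (v m)·(φ m))² ≤ C₄² · (M·C₅² + M·(M−1)·(C₅² − d²)). -/
import Mathlib


open Finset in
theorem stmt_3 (M : ℕ) (hM : 2 ≤ M) (φ v : Fin M → ℝ) (C₄ C₅ d : ℝ)
    (hφ0 : ∀ m, 0 ≤ φ m) (hφ : ∀ m, φ m ≤ C₅)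
    (hv : ∀ m, |v m| ≤ C₄)
    (hdiv : ∑ m, ∑ n ∈ Finset.univ.filter (fun n => n ≠ m), (φ m - φ n)^2 ≥
      2 * (M : ℝ) * ((M : ℝ) - 1) * d^2) :
    (∑ m, v m * φ m)^2 ≤
      C₄^2 * ((M : ℝ) * C₅^2 + (M : ℝ) * ((M : ℝ) - 1) * (C₅^2 - d^2)) := by
  have hC4 : 0 ≤ C₄ := le_trans (abs_nonneg _) (hv ⟨0, by omega⟩)
  set S := ∑ m, φ m with hS
  set A := ∑ m, (φ m)^2 with hA
  have hSnn : 0 ≤ S := Finset.sum_nonneg fun m _ => hφ0 m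
  -- filtered sum equals full double sum
  have hfull : ∑ m, ∑ n ∈ Finset.univ.filter (fun n => n ≠ m), (φ m - φ n)^2
      = ∑ m, ∑ n, (φ m - φ n)^2 := by
    refine Finset.sum_congr rfl fun m _ => ?_
    refine Finset.sum_subset (Finset.filter_subset _ _) fun n _ hn => ?_
    simp only [Finset.mem_filter, Finset.mem_univ, true_and, not_not] at hn
    simp [hn]
  have hexp : ∑ m, ∑ n, (φ m - φ n)^2 = 2 * (M : ℝ) * A - 2 * S^2 := by
    have : ∀ m : Fin M, ∑ n, (φ m - φ n)^2
        = (M : ℝ) * (φ m)^2 - 2 * φ m * S + A := by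
      intro m
      have : ∀ n : Fin M, (φ m - φ n)^2 = (φ m)^2 - 2 * φ m * φ n + (φ n)^2 := by
        intro n; ring
      simp only [this, Finset.sum_add_distrib, Finset.sum_sub_distrib,
        Finset.sum_const, Finset.card_univ, Fintype.card_fin, ← Finset.mul_sum]
      push_cast; ring
    simp only [this, Finset.sum_add_distrib, Finset.sum_sub_distrib, ← Finset.sum_mul,
      ← Finset.mul_sum, Finset.sum_const, Finset.card_univ, Fintype.card_fin,
      nsmul_eq_mul, ← hS, ← hA]
    ring
  have hD : 2 * (M : ℝ) * ((M : ℝ) - 1) * d^2 ≤ 2 * (M : ℝ) * A - 2 * S^2 := by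
    rw [← hexp, ← hfull]; exact hdiv
  have hAle : A ≤ (M : ℝ) * C₅^2 := by
    rw [hA]
    calc ∑ m, (φ m)^2 ≤ ∑ m : Fin M, C₅^2 :=
          Finset.sum_le_sum fun m _ => pow_le_pow_left₀ (hφ0 m) (hφ m) 2
      _ = (M : ℝ) * C₅^2 := by simp [Finset.card_univ, mul_comm]
  have hS2 : S^2 ≤ (M : ℝ) * C₅^2 + (M : ℝ) * ((M : ℝ) - 1) * (C₅^2 - d^2) := by
    have hM1 : (1 : ℝ) ≤ (M : ℝ) := by exact_mod_cast Nat.one_le_of_lt hM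
    nlinarith [hD, hAle]
  have habs : |∑ m, v m * φ m| ≤ C₄ * S := by
    calc |∑ m, v m * φ m| ≤ ∑ m, |v m * φ m| := Finset.abs_sum_le_sum_abs _ _
      _ ≤ ∑ m, C₄ * φ m := by
          refine Finset.sum_le_sum fun m _ => ?_
          rw [abs_mul, abs_of_nonneg (hφ0 m)]
          exact mul_le_mul_of_nonneg_right (hv m) (hφ0 m)
      _ = C₄ * S := by rw [hS, Finset.mul_sum]
  have h1 : (∑ m, v m * φ m)^2 ≤ (C₄ * S)^2 := by
    have := sq_abs (∑ m, v m * φ m)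
    nlinarith [abs_nonneg (∑ m, v m * φ m)]
  calc (∑ m, v m * φ m)^2 ≤ (C₄ * S)^2 := h1
    _ = C₄^2 * S^2 := by ring
    _ ≤ C₄^2 * ((M : ℝ) * C₅^2 + (M : ℝ) * ((M : ℝ) - 1) * (C₅^2 - d^2)) :=
        mul_le_mul_of_nonneg_left hS2 (sq_nonneg _)
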